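/- Let H be a 3-partite 3-graph with vertex classes V1, V2, V3 such that each link graph Lk_{V_i}(H) has a perfect matching. Suppose X ⊆ V_j is a minimal equineighbored set of Lk_{V_i}(H) with |X| = 2, and suppose there do not exist two disjoint edges of H each meeting X. Then the set of edges of H incident to X forms a truncated multi-Fano plane. -/

import Mathlib

noncomputable section

attribute [local instance] Classical.propDecidable

universe u

variable {α : Type u}

/-- A 3-partite 3-uniform multihypergraph: vertex classes `V1, V2, V3` and a
multiset of edges, each edge being a triple with one vertex in each class
(parallel edges are allowed via multiplicities). -/
structure TriSys (α : Type u) where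
  V1 : Finset α
  V2 : Finset α
  V3 : Finset α
  h12 : Disjoint V1 V2
  h13 : Disjoint V1 V3
  h23 : Disjoint V2 V3
  edges : Multiset (α × α × α)
  mem1 : ∀ e ∈ edges, e.1 ∈ V1
  mem2 : ∀ e ∈ edges, e.2.1 ∈ V2
  mem3 : ∀ e ∈ edges, e.2.2 ∈ V3

/-- The vertex set of an edge. -/
def evset (e : α × α × α) : Finset α := {e.1, e.2.1, e.2.2}

/-- The coordinates of an edge, indexed by `Fin 3`. -/
def ecoord (e : α × α × α) : Fin 3 → α := ![e.1, e.2.1, e.2.2]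

namespace TriSys

def verts (H : TriSys α) : Finset α := H.V1 ∪ H.V2 ∪ H.V3

/-- The vertex classes, indexed by `Fin 3`. -/
def cls (H : TriSys α) : Fin 3 → Finset α := ![H.V1, H.V2, H.V3]

/-- A matching: a set of (pairwise vertex-disjoint) edges. -/
def IsMatching (H : TriSys α) (M : Finset (α × α × α)) : Prop :=
  (∀ e ∈ M, e ∈ H.edges) ∧
  (↑M : Set (α × α × α)).Pairwise fun e f => Disjoint (evset e) (evset f)

/-- The matching number ν. -/
def nu (H : TriSys α) : ℕ :=
  sSup {n : ℕ | ∃ M : Finset (α × α × α), H.IsMatching M ∧ M.card = n}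

/-- A vertex cover: a set of vertices meeting every edge. -/
def IsCover (H : TriSys α) (T : Finset α) : Prop :=
  ∀ e ∈ H.edges, ∃ v ∈ T, v ∈ evset e

/-- The vertex cover number τ. -/
def tau (H : TriSys α) : ℕ :=
  sInf {n : ℕ | ∃ T : Finset α, H.IsCover T ∧ T.card = n}

/-- Deletion of a set of vertices (and all edges meeting it). -/
def delete (H : TriSys α) (S : Finset α) : TriSys α where
  V1 := H.V1 \ S
  V2 := H.V2 \ S
  V3 := H.V3 \ S
  h12 := H.h12.mono Finset.sdiff_subset Finset.sdiff_subset
  h13 := H.h13.mono Finset.sdiff_subset Finset.sdiff_subset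
  h23 := H.h23.mono Finset.sdiff_subset Finset.sdiff_subset
  edges := H.edges.filter fun e => e.1 ∉ S ∧ e.2.1 ∉ S ∧ e.2.2 ∉ S
  mem1 := fun e he => by
    rw [Multiset.mem_filter] at he
    exact Finset.mem_sdiff.mpr ⟨H.mem1 e he.1, he.2.1⟩
  mem2 := fun e he => by
    rw [Multiset.mem_filter] at he
    exact Finset.mem_sdiff.mpr ⟨H.mem2 e he.1, he.2.2.1⟩
  mem3 := fun e he => by
    rw [Multiset.mem_filter] at he
    exact Finset.mem_sdiff.mpr ⟨H.mem3 e he.1, he.2.2.2⟩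

end TriSys

/-- The four edges of a truncated Fano plane on vertices `a,b,c,x,y,z`
(with classes `{a,x} ⊆ V1`, `{b,y} ⊆ V2`, `{c,z} ⊆ V3`). -/
def FanoEdges (a b c x y z : α) : Finset (α × α × α) :=
  {(a, b, c), (a, y, z), (x, b, z), (x, y, c)}

/-- The supports of the edges of `H` induced on a vertex subset `F`. -/
def inducedEdges (H : TriSys α) (F : Finset α) : Finset (α × α × α) :=
  (H.edges.filter fun e => evset e ⊆ F).toFinset

/-- `H` induces a truncated multi-Fano plane on the six-element set `F`. -/
def IsMultiFano (H : TriSys α) (F : Finset α) : Prop :=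
  ∃ a b c x y z : α,
    a ∈ H.V1 ∧ x ∈ H.V1 ∧ b ∈ H.V2 ∧ y ∈ H.V2 ∧ c ∈ H.V3 ∧ z ∈ H.V3 ∧
    a ≠ x ∧ b ≠ y ∧ c ≠ z ∧
    F = {a, b, c, x, y, z} ∧
    inducedEdges H F = FanoEdges a b c x y z

/-- The data of an FR-partition: the families `𝓕` and `𝓡` and the set `W`. -/
structure FRData (α : Type u) where
  Ffam : Finset (Finset α)
  Rfam : Finset (Finset α)
  W : Finset α

/-- The union of the members of a family of sets. -/
def famUnion (G : Finset (Finset α)) : Finset α := G.biUnion id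

/-- `(𝓕, 𝓡, W)` is an FR-partition of `H`. -/
def IsFRPartition (H : TriSys α) (P : FRData α) : Prop :=
  (∀ A ∈ P.Ffam, ∀ B ∈ P.Ffam, A ≠ B → Disjoint A B) ∧
  (∀ A ∈ P.Rfam, ∀ B ∈ P.Rfam, A ≠ B → Disjoint A B) ∧
  (∀ A ∈ P.Ffam, ∀ B ∈ P.Rfam, Disjoint A B) ∧
  (∀ A ∈ P.Ffam, Disjoint A P.W) ∧
  (∀ B ∈ P.Rfam, Disjoint B P.W) ∧
  famUnion P.Ffam ∪ famUnion P.Rfam ∪ P.W = H.verts ∧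
  (∀ A ∈ P.Ffam, IsMultiFano H A) ∧
  (∀ B ∈ P.Rfam, ∃ r1 ∈ H.V1, ∃ r2 ∈ H.V2, ∃ r3 ∈ H.V3, B = {r1, r2, r3}) ∧
  P.Ffam.card + P.Rfam.card = H.nu

/-- `w` is joined to `R` in the auxiliary bipartite graph `B_i`: some edge of
`H` contains `w` and two vertices of `R`. -/
def RAdj (H : TriSys α) (R : Finset α) (w : α) : Prop :=
  ∃ e ∈ H.edges, w ∈ evset e ∧ 2 ≤ (evset e ∩ R).card

/-- The auxiliary bipartite graph on `Rfam` and `Wi` has a matching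
saturating `Rfam`. -/
def SaturatingR (H : TriSys α) (Rfam : Finset (Finset α)) (Wi : Finset α) : Prop :=
  ∃ f : Finset α → α, Set.InjOn f ↑Rfam ∧ ∀ R ∈ Rfam, f R ∈ Wi ∧ RAdj H R (f R)

/-- Matchability of an FR-partition. -/
def IsMatchable (H : TriSys α) (P : FRData α) : Prop :=
  ∀ i : Fin 3, SaturatingR H P.Rfam (P.W ∩ H.cls i)

/-- The edge-home property: every edge is an `F`-edge or an `R`-edge. -/
def EdgeHome (H : TriSys α) (P : FRData α) : Prop :=
  ∀ e ∈ H.edges,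
    (∃ A ∈ P.Ffam, evset e ⊆ A) ∨ (∃ B ∈ P.Rfam, 2 ≤ (evset e ∩ B).card)

/-- A home-base partition: a matchable FR-partition with the edge-home
property. -/
def IsHomeBasePartition (H : TriSys α) (P : FRData α) : Prop :=
  IsFRPartition H P ∧ IsMatchable H P ∧ EdgeHome H P

/-- A home-base hypergraph: one admitting a home-base partition. -/
def IsHomeBase (H : TriSys α) : Prop :=
  ∃ P : FRData α, IsHomeBasePartition H P

/-- The neighborhood of a family `U` of `R`'s in the auxiliary bipartite
graph with `W`-side `Wi`. -/
def RNbhd (H : TriSys α) (Wi : Finset α) (U : Finset (Finset α)) : Finset α :=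
  Wi.filter fun w => ∃ R ∈ U, RAdj H R w

/-- `C` is an essential subset of `Wi` in the auxiliary bipartite graph:
`C = N(U)` for some `U ⊆ Rfam` with `|U| = |C|`. -/
def EssentialSet (H : TriSys α) (Rfam : Finset (Finset α)) (Wi : Finset α)
    (C : Finset α) : Prop :=
  ∃ U ⊆ Rfam, U.card = C.card ∧ RNbhd H Wi U = C

/-- `w` is a superfluous vertex of `Wi`: it lies in no essential subset
(equivalently, outside the maximal essential subset). -/
def Superfluous (H : TriSys α) (Rfam : Finset (Finset α)) (Wi : Finset α)
    (w : α) : Prop :=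
  w ∈ Wi ∧ ∀ C, EssentialSet H Rfam Wi C → w ∉ C

/-- `w` is a superfluous `W`-vertex of the FR-partition `P` (in its class). -/
def SuperfluousVert (H : TriSys α) (P : FRData α) (w : α) : Prop :=
  ∃ i : Fin 3, Superfluous H P.Rfam (P.W ∩ H.cls i) w

/-- `v` is an essential `W`-vertex of the FR-partition `P`. -/
def EssentialVertIn (H : TriSys α) (P : FRData α) (v : α) : Prop :=
  ∃ i : Fin 3, EssentialSet H P.Rfam (P.W ∩ H.cls i) {v}

/-- `v` is essential for `R`: it is the unique neighbor of `R` in some `B_i`. -/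
def EssentialForIn (H : TriSys α) (P : FRData α) (R : Finset α) (v : α) : Prop :=
  ∃ i : Fin 3, RNbhd H (P.W ∩ H.cls i) {R} = {v}

/-- The neighborhood, inside vertex class `j`, of a set `X` of class-`k`
vertices in the link graph of `H` over the remaining vertex class. -/
def nbr (H : TriSys α) (j k : Fin 3) (X : Finset α) : Finset α :=
  (H.cls j).filter fun v => ∃ e ∈ H.edges, ecoord e j = v ∧ ecoord e k ∈ X

/-- A cromulent triple `(Y1, Y2, X)` with `Y1 ⊆ V_i`, `Y2 ⊆ V_j`, `X ⊆ V_k`. -/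
def IsCromulent (H : TriSys α) (i j k : Fin 3) (Y1 Y2 X : Finset α) : Prop :=
  i ≠ j ∧ i ≠ k ∧ j ≠ k ∧
  Y1.Nonempty ∧ Y2.Nonempty ∧ X.Nonempty ∧
  Y1 ⊆ H.cls i ∧ Y2 ⊆ H.cls j ∧ X ⊆ H.cls k ∧
  Y1.card = Y2.card ∧ Y1.card ≤ X.card ∧
  nbr H j k X = Y2 ∧
  (∃ M : Finset (α × α × α), H.IsMatching M ∧ M.card = Y1.card ∧
    ∀ e ∈ M, evset e ⊆ Y1 ∪ Y2 ∪ X) ∧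
  IsHomeBase (H.delete (Y1 ∪ Y2 ∪ X)) ∧
  (H.delete (Y1 ∪ Y2 ∪ X)).nu + Y1.card = H.nu ∧
  ∀ P : FRData α, IsHomeBasePartition (H.delete (Y1 ∪ Y2 ∪ X)) P →
    nbr H i k X ⊆ Y1 ∪ famUnion P.Rfam ∪ famUnion P.Ffam

/-- A perfectly cromulent triple: condition (5) is strengthened to
`N_{Lk_{V_j}}(X) = Y1`. -/
def IsPerfCromulent (H : TriSys α) (i j k : Fin 3) (Y1 Y2 X : Finset α) : Prop :=
  i ≠ j ∧ i ≠ k ∧ j ≠ k ∧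
  Y1.Nonempty ∧ Y2.Nonempty ∧ X.Nonempty ∧
  Y1 ⊆ H.cls i ∧ Y2 ⊆ H.cls j ∧ X ⊆ H.cls k ∧
  Y1.card = Y2.card ∧ Y1.card ≤ X.card ∧
  nbr H j k X = Y2 ∧
  (∃ M : Finset (α × α × α), H.IsMatching M ∧ M.card = Y1.card ∧
    ∀ e ∈ M, evset e ⊆ Y1 ∪ Y2 ∪ X) ∧
  IsHomeBase (H.delete (Y1 ∪ Y2 ∪ X)) ∧
  (H.delete (Y1 ∪ Y2 ∪ X)).nu + Y1.card = H.nu ∧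
  nbr H i k X = Y1

/-- The link graph of `H` over the class other than `j, k` has a perfect
matching, encoded as a bijection from class `j` onto class `k` realized by
edges of `H`. -/
def LinkPerfectMatching (H : TriSys α) (j k : Fin 3) : Prop :=
  ∃ f : α → α, Set.InjOn f ↑(H.cls j) ∧ (H.cls j).image f = H.cls k ∧
    ∀ v ∈ H.cls j, ∃ e ∈ H.edges, ecoord e j = v ∧ ecoord e k = f v

/-- A proper FR-partition: no `R ∈ 𝓡` together with an edge consisting of
three `W`-vertices induces a truncated (multi-)Fano plane. -/
def IsProper (H : TriSys α) (P : FRData α) : Prop :=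
  ¬ ∃ R ∈ P.Rfam, ∃ e ∈ H.edges, evset e ⊆ P.W ∧ IsMultiFano H (R ∪ evset e)


/-!
Minimality of `X = {p, q}` forces `N({p}) = N({q}) = N(X) = {u, v}`, so each of the pairs
`pu, pv, qu, qv` lies in an edge. Since no two edges through `X` are disjoint, two such edges
whose vertices in `X` and in `N(X)` both differ share their third vertex. Hence the third vertex
is some `A` on `pu, qv` and some `B` on `pv, qu`, and every edge through `X` is determined by its
vertices in `X` and `N(X)`. Finally `A ≠ B`, because a perfect matching of the link graph between
the class of `X` and the class of `A, B` sends `p` and `q` to different vertices.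
-/

lemma fin_three_eq_or_eq_or_eq {i j k : Fin 3} (hij : i ≠ j) (hik : i ≠ k) (hjk : j ≠ k)
    (l : Fin 3) : l = i ∨ l = j ∨ l = k := by
  omega

lemma ecoord_injective : Function.Injective (ecoord (α := α)) := by
  rintro ⟨a, b, c⟩ ⟨a', b', c'⟩ h
  simp only [ecoord, Matrix.vecCons_inj] at h
  simp [h]

lemma ext_of_ecoord_eq {i j k : Fin 3} (hij : i ≠ j) (hik : i ≠ k) (hjk : j ≠ k)
    {e f : α × α × α} (hi : ecoord e i = ecoord f i) (hj : ecoord e j = ecoord f j)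
    (hk : ecoord e k = ecoord f k) : e = f :=
  ecoord_injective <| funext fun l => by
    rcases fin_three_eq_or_eq_or_eq hij hik hjk l with rfl | rfl | rfl <;> assumption

lemma mem_evset_iff {e : α × α × α} {w : α} : w ∈ evset e ↔ ∃ l, ecoord e l = w := by
  simp [evset, ecoord, Fin.exists_fin_succ, eq_comm]

lemma ecoord_eq_of_exists_ecoord_eq {i j k : Fin 3} (hij : i ≠ j) (hik : i ≠ k) (hjk : j ≠ k)
    {e f : α × α × α} (h : ∃ l, ecoord e l = ecoord f l) (hj : ecoord e j ≠ ecoord f j)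
    (hk : ecoord e k ≠ ecoord f k) : ecoord e i = ecoord f i := by
  obtain ⟨l, hl⟩ := h
  rcases fin_three_eq_or_eq_or_eq hij hik hjk l with rfl | rfl | rfl
  exacts [hl, absurd hl hj, absurd hl hk]

def InFanoPattern (i j k : Fin 3) (A B p q u v : α) (e : α × α × α) : Prop :=
  (ecoord e i = A ∧ ecoord e j = p ∧ ecoord e k = u) ∨
  (ecoord e i = A ∧ ecoord e j = q ∧ ecoord e k = v) ∨
  (ecoord e i = B ∧ ecoord e j = p ∧ ecoord e k = v) ∨
  (ecoord e i = B ∧ ecoord e j = q ∧ ecoord e k = u)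

lemma InFanoPattern.ecoord_eq {i j k : Fin 3} {A B p q u v : α} (hpq : p ≠ q) (huv : u ≠ v)
    {e f : α × α × α} (he : InFanoPattern i j k A B p q u v e)
    (hf : InFanoPattern i j k A B p q u v f) (hj : ecoord e j = ecoord f j)
    (hk : ecoord e k = ecoord f k) : ecoord e i = ecoord f i := by
  rcases he with he | he | he | he <;> rcases hf with hf | hf | hf | hf <;> simp_all

lemma exists_forall_inFanoPattern {i j k : Fin 3} (hij : i ≠ j) (hik : i ≠ k) (hjk : j ≠ k)
    {S : Finset (α × α × α)} {p q u v : α} (hpq : p ≠ q) (huv : u ≠ v)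
    (hS : ∀ e ∈ S, ecoord e j ∈ ({p, q} : Finset α) ∧ ecoord e k ∈ ({u, v} : Finset α))
    (hall : ∀ x ∈ ({p, q} : Finset α), ∀ n ∈ ({u, v} : Finset α),
      ∃ e ∈ S, ecoord e j = x ∧ ecoord e k = n)
    (hint : ∀ e ∈ S, ∀ f ∈ S, ∃ l, ecoord e l = ecoord f l)
    (hsep : ∃ e ∈ S, ∃ f ∈ S, ecoord e i ≠ ecoord f i) :
    ∃ a ∈ S, ∃ b ∈ S, ecoord a i ≠ ecoord b i ∧
      ∀ e ∈ S, InFanoPattern i j k (ecoord a i) (ecoord b i) p q u v e := by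
  have hsame : ∀ e ∈ S, ∀ f ∈ S, ecoord e j ≠ ecoord f j → ecoord e k ≠ ecoord f k →
      ecoord e i = ecoord f i := fun e he f hf =>
    ecoord_eq_of_exists_ecoord_eq hij hik hjk (hint e he f hf)
  obtain ⟨e₁, he₁, he₁j, he₁k⟩ := hall p (by simp) u (by simp)
  obtain ⟨e₂, he₂, he₂j, he₂k⟩ := hall q (by simp) v (by simp)
  obtain ⟨e₃, he₃, he₃j, he₃k⟩ := hall p (by simp) v (by simp)
  obtain ⟨e₄, he₄, he₄j, he₄k⟩ := hall q (by simp) u (by simp)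
  have h₂ : ecoord e₂ i = ecoord e₁ i := hsame e₂ he₂ e₁ he₁
    (by rwa [he₂j, he₁j, ne_comm]) (by rwa [he₂k, he₁k, ne_comm])
  have h₄ : ecoord e₄ i = ecoord e₃ i := hsame e₄ he₄ e₃ he₃
    (by rwa [he₄j, he₃j, ne_comm]) (by rwa [he₄k, he₃k])
  have hpattern : ∀ e ∈ S, InFanoPattern i j k (ecoord e₁ i) (ecoord e₃ i) p q u v e := by
    intro e he
    obtain ⟨hj, hk⟩ := hS e he
    simp only [Finset.mem_insert, Finset.mem_singleton] at hj hk
    rcases hj with hp | hq <;> rcases hk with hu | hv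
    · exact Or.inl
        ⟨(hsame e he e₂ he₂ (by rwa [hp, he₂j]) (by rwa [hu, he₂k])).trans h₂, hp, hu⟩
    · exact Or.inr <| Or.inr <| Or.inl
        ⟨(hsame e he e₄ he₄ (by rwa [hp, he₄j]) (by rwa [hv, he₄k, ne_comm])).trans h₄,
          hp, hv⟩
    · exact Or.inr <| Or.inr <| Or.inr
        ⟨hsame e he e₃ he₃ (by rwa [hq, he₃j, ne_comm]) (by rwa [hu, he₃k]), hq, hu⟩
    · exact Or.inr <| Or.inl
        ⟨hsame e he e₁ he₁ (by rwa [hq, he₁j, ne_comm]) (by rwa [hv, he₁k, ne_comm]),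
          hq, hv⟩
  refine ⟨e₁, he₁, e₃, he₃, fun hAB => ?_, hpattern⟩
  obtain ⟨e, he, f, hf, hef⟩ := hsep
  have hi : ∀ g ∈ S, ecoord g i = ecoord e₁ i := fun g hg => by
    rcases hpattern g hg with h | h | h | h <;> simp [h.1, hAB]
  exact hef ((hi e he).trans (hi f hf).symm)

lemma mem_of_inFanoPattern {i j k : Fin 3} (hij : i ≠ j) (hik : i ≠ k) (hjk : j ≠ k)
    {S : Finset (α × α × α)} {A B p q u v : α} (hpq : p ≠ q) (huv : u ≠ v)
    (hS : ∀ e ∈ S, InFanoPattern i j k A B p q u v e)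
    (hall : ∀ x ∈ ({p, q} : Finset α), ∀ n ∈ ({u, v} : Finset α),
      ∃ e ∈ S, ecoord e j = x ∧ ecoord e k = n)
    {e : α × α × α} (he : InFanoPattern i j k A B p q u v e) : e ∈ S := by
  have hjk' : ecoord e j ∈ ({p, q} : Finset α) ∧ ecoord e k ∈ ({u, v} : Finset α) := by
    rcases he with h | h | h | h <;> simp [h.2.1, h.2.2]
  obtain ⟨f, hf, hfj, hfk⟩ := hall _ hjk'.1 _ hjk'.2
  rwa [ext_of_ecoord_eq hij hik hjk (he.ecoord_eq hpq huv (hS f hf) hfj.symm hfk.symm)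
    hfj.symm hfk.symm]

lemma exists_fanoEdges_eq (H : TriSys α) (S : Finset (α × α × α)) {i j k : Fin 3}
    (hij : i ≠ j) (hik : i ≠ k) (hjk : j ≠ k) {A B p q u v : α}
    (hA : A ∈ H.cls i) (hB : B ∈ H.cls i) (hp : p ∈ H.cls j) (hq : q ∈ H.cls j)
    (hu : u ∈ H.cls k) (hv : v ∈ H.cls k) (hAB : A ≠ B) (hpq : p ≠ q) (huv : u ≠ v)
    (hS : ∀ e, e ∈ S ↔ InFanoPattern i j k A B p q u v e) :
    ∃ a b c x y z : α,
      a ∈ H.V1 ∧ x ∈ H.V1 ∧ b ∈ H.V2 ∧ y ∈ H.V2 ∧ c ∈ H.V3 ∧ z ∈ H.V3 ∧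
      a ≠ x ∧ b ≠ y ∧ c ≠ z ∧ S = FanoEdges a b c x y z := by
  have hFano : ∀ {a b c x y z : α}, (∀ e : α × α × α, e ∈ S ↔
      (e.1 = a ∧ e.2.1 = b ∧ e.2.2 = c) ∨ (e.1 = a ∧ e.2.1 = y ∧ e.2.2 = z) ∨
      (e.1 = x ∧ e.2.1 = b ∧ e.2.2 = z) ∨ (e.1 = x ∧ e.2.1 = y ∧ e.2.2 = c)) →
      S = FanoEdges a b c x y z := fun h => Finset.ext fun e => by
    simp [h, FanoEdges, Prod.ext_iff]
  fin_cases i <;> fin_cases j <;> fin_cases k <;>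
    simp only [ne_eq, not_true_eq_false] at hij hik hjk
  on_goal 1 => refine ⟨A, p, u, B, q, v, hA, hB, hp, hq, hu, hv, hAB, hpq, huv,
    hFano fun e => ?_⟩
  on_goal 2 => refine ⟨A, u, p, B, v, q, hA, hB, hu, hv, hp, hq, hAB, huv, hpq,
    hFano fun e => ?_⟩
  on_goal 3 => refine ⟨p, A, u, q, B, v, hp, hq, hA, hB, hu, hv, hpq, hAB, huv,
    hFano fun e => ?_⟩
  on_goal 4 => refine ⟨u, A, p, v, B, q, hu, hv, hA, hB, hp, hq, huv, hAB, hpq,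
    hFano fun e => ?_⟩
  on_goal 5 => refine ⟨p, u, A, q, v, B, hp, hq, hu, hv, hA, hB, hpq, huv, hAB,
    hFano fun e => ?_⟩
  on_goal 6 => refine ⟨u, p, A, v, q, B, hu, hv, hp, hq, hA, hB, huv, hpq, hAB,
    hFano fun e => ?_⟩
  all_goals simp [hS, InFanoPattern, ecoord, and_assoc, and_comm, and_left_comm, or_comm,
    or_left_comm]

def incidentEdges (H : TriSys α) (X : Finset α) : Finset (α × α × α) :=
  (H.edges.filter fun e => (evset e ∩ X).Nonempty).toFinset

namespace TriSys

variable (H : TriSys α)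

lemma ecoord_mem_cls {e : α × α × α} (he : e ∈ H.edges) (l : Fin 3) :
    ecoord e l ∈ H.cls l := by
  fin_cases l
  exacts [H.mem1 e he, H.mem2 e he, H.mem3 e he]

lemma disjoint_cls {l m : Fin 3} (h : l ≠ m) : Disjoint (H.cls l) (H.cls m) := by
  fin_cases l <;> fin_cases m <;>
    simp_all [cls, H.h12, H.h13, H.h23, H.h12.symm, H.h13.symm, H.h23.symm]

variable {H}

lemma eq_of_ecoord_mem_cls {e : α × α × α} (he : e ∈ H.edges) {l m : Fin 3}
    (h : ecoord e l ∈ H.cls m) : l = m := by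
  by_contra hlm
  exact Finset.disjoint_left.mp (H.disjoint_cls hlm) (H.ecoord_mem_cls he l) h

lemma exists_ecoord_eq_of_not_disjoint {e f : α × α × α} (he : e ∈ H.edges)
    (hf : f ∈ H.edges) (h : ¬ Disjoint (evset e) (evset f)) :
    ∃ l, ecoord e l = ecoord f l := by
  obtain ⟨w, hwe, hwf⟩ := Finset.not_disjoint_iff.mp h
  obtain ⟨l, rfl⟩ := mem_evset_iff.mp hwe
  obtain ⟨m, hm⟩ := mem_evset_iff.mp hwf
  obtain rfl := eq_of_ecoord_mem_cls he (hm ▸ H.ecoord_mem_cls hf m)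
  exact ⟨l, hm.symm⟩

lemma mem_nbr {j k : Fin 3} {X : Finset α} {v : α} :
    v ∈ nbr H j k X ↔
      v ∈ H.cls j ∧ ∃ e ∈ H.edges, ecoord e j = v ∧ ecoord e k ∈ X :=
  Finset.mem_filter

lemma nbr_mono {j k : Fin 3} {X Y : Finset α} (h : X ⊆ Y) : nbr H j k X ⊆ nbr H j k Y :=
  Finset.monotone_filter_right _ fun _ _ ⟨e, he, hej, hek⟩ => ⟨e, he, hej, h hek⟩

lemma nbr_singleton_nonempty {j k : Fin 3} (hpm : LinkPerfectMatching H j k) {x : α}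
    (hx : x ∈ H.cls j) : (nbr H k j {x}).Nonempty := by
  obtain ⟨f, -, -, hf⟩ := hpm
  obtain ⟨e, he, hej, hek⟩ := hf x hx
  exact ⟨ecoord e k, mem_nbr.mpr ⟨H.ecoord_mem_cls he k, e, he, rfl, by simp [hej]⟩⟩

lemma nbr_singleton_eq_of_minimal {j k : Fin 3} (hpm : LinkPerfectMatching H j k) {X : Finset α}
    (hX : X ⊆ H.cls j) (hXcard : X.card = 2) (hequi : (nbr H k j X).card = X.card)
    (hmin : ∀ X' ⊂ X, X'.Nonempty → (nbr H k j X').card ≠ X'.card) {x : α} (hx : x ∈ X) :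
    nbr H k j {x} = nbr H k j X := by
  have hssub : {x} ⊂ X := Finset.ssubset_iff_subset_ne.mpr
    ⟨Finset.singleton_subset_iff.mpr hx, fun h => by simp [← h] at hXcard⟩
  have hne : (nbr H k j {x}).card ≠ 1 := by
    simpa using hmin {x} hssub (Finset.singleton_nonempty x)
  have hpos := (nbr_singleton_nonempty hpm (hX hx)).card_pos
  exact Finset.eq_of_subset_of_card_le (nbr_mono hssub.subset) (by omega)

lemma mem_incidentEdges {X : Finset α} {j : Fin 3} (hX : X ⊆ H.cls j) {e : α × α × α} :
    e ∈ incidentEdges H X ↔ e ∈ H.edges ∧ ecoord e j ∈ X := by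
  rw [incidentEdges, Multiset.mem_toFinset, Multiset.mem_filter]
  refine and_congr_right fun he => ⟨fun ⟨w, hw⟩ => ?_, fun h => ⟨_, Finset.mem_inter.mpr
    ⟨mem_evset_iff.mpr ⟨j, rfl⟩, h⟩⟩⟩
  obtain ⟨hwe, hwX⟩ := Finset.mem_inter.mp hw
  obtain ⟨l, rfl⟩ := mem_evset_iff.mp hwe
  obtain rfl := eq_of_ecoord_mem_cls he (hX hwX)
  exact hwX

lemma ecoord_mem_of_mem_incidentEdges {X : Finset α} {j k : Fin 3} (hX : X ⊆ H.cls j)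
    {e : α × α × α} (he : e ∈ incidentEdges H X) :
    ecoord e j ∈ X ∧ ecoord e k ∈ nbr H k j X := by
  obtain ⟨he, hej⟩ := (mem_incidentEdges hX).mp he
  exact ⟨hej, mem_nbr.mpr ⟨H.ecoord_mem_cls he k, e, he, rfl, hej⟩⟩

lemma exists_mem_incidentEdges {X : Finset α} {j k : Fin 3} (hX : X ⊆ H.cls j) {x n : α}
    (hx : x ∈ X) (hn : n ∈ nbr H k j {x}) :
    ∃ e ∈ incidentEdges H X, ecoord e j = x ∧ ecoord e k = n := by
  obtain ⟨-, e, he, hek, hej⟩ := mem_nbr.mp hn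
  rw [Finset.mem_singleton] at hej
  exact ⟨e, (mem_incidentEdges hX).mpr ⟨he, hej ▸ hx⟩, hej, hek⟩

lemma exists_ecoord_eq_of_mem_incidentEdges {X : Finset α}
    (h : ¬ ∃ e ∈ H.edges, ∃ f ∈ H.edges,
      (evset e ∩ X).Nonempty ∧ (evset f ∩ X).Nonempty ∧ Disjoint (evset e) (evset f))
    {e f : α × α × α} (he : e ∈ incidentEdges H X) (hf : f ∈ incidentEdges H X) :
    ∃ l, ecoord e l = ecoord f l := by
  simp only [incidentEdges, Multiset.mem_toFinset, Multiset.mem_filter] at he hf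
  exact exists_ecoord_eq_of_not_disjoint he.1 hf.1 fun hef =>
    h ⟨e, he.1, f, hf.1, he.2, hf.2, hef⟩

lemma exists_mem_incidentEdges_ecoord_ne {i j : Fin 3} (hpm : LinkPerfectMatching H j i)
    {X : Finset α} (hX : X ⊆ H.cls j) {p q : α} (hp : p ∈ X) (hq : q ∈ X) (hpq : p ≠ q) :
    ∃ e ∈ incidentEdges H X, ∃ f ∈ incidentEdges H X, ecoord e i ≠ ecoord f i := by
  obtain ⟨g, hg, -, hge⟩ := hpm
  obtain ⟨e, he, hej, hei⟩ := hge p (hX hp)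
  obtain ⟨f, hf, hfj, hfi⟩ := hge q (hX hq)
  refine ⟨e, (mem_incidentEdges hX).mpr ⟨he, hej ▸ hp⟩, f, (mem_incidentEdges hX).mpr
    ⟨hf, hfj ▸ hq⟩, ?_⟩
  rw [hei, hfi]
  exact hg.ne (hX hp) (hX hq) hpq

end TriSys

theorem incident_edges_form_multiFano_general (H : TriSys α)
    (hpm : ∀ j k : Fin 3, j ≠ k → LinkPerfectMatching H j k)
    (i j k : Fin 3) (hij : i ≠ j) (hik : i ≠ k) (hjk : j ≠ k)
    (X : Finset α) (hXsub : X ⊆ H.cls j) (hXcard : X.card = 2)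
    (hequi : (nbr H k j X).card = X.card)
    (hmin : ∀ X' ⊂ X, X'.Nonempty → (nbr H k j X').card ≠ X'.card)
    (hnotwo : ¬ ∃ e ∈ H.edges, ∃ f ∈ H.edges,
      (evset e ∩ X).Nonempty ∧ (evset f ∩ X).Nonempty ∧
      Disjoint (evset e) (evset f)) :
    ∃ a b c x y z : α,
      a ∈ H.V1 ∧ x ∈ H.V1 ∧ b ∈ H.V2 ∧ y ∈ H.V2 ∧ c ∈ H.V3 ∧ z ∈ H.V3 ∧
      a ≠ x ∧ b ≠ y ∧ c ≠ z ∧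
      (H.edges.filter fun e => (evset e ∩ X).Nonempty).toFinset =
        FanoEdges a b c x y z := by
  obtain ⟨p, q, hpq, rfl⟩ := Finset.card_eq_two.mp hXcard
  obtain ⟨u, v, huv, hN⟩ := Finset.card_eq_two.mp (hequi.trans hXcard)
  have hall : ∀ x ∈ ({p, q} : Finset α), ∀ n ∈ ({u, v} : Finset α),
      ∃ e ∈ incidentEdges H {p, q}, ecoord e j = x ∧ ecoord e k = n := fun x hx n hn =>
    TriSys.exists_mem_incidentEdges hXsub hx <|
      (TriSys.nbr_singleton_eq_of_minimal (hpm j k hjk) hXsub hXcard hequi hmin hx).trans hN ▸ hn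
  obtain ⟨a, ha, b, hb, hab, hpat⟩ := exists_forall_inFanoPattern hij hik hjk hpq huv
    (fun e he => hN ▸ TriSys.ecoord_mem_of_mem_incidentEdges hXsub he) hall
    (fun e he f hf => TriSys.exists_ecoord_eq_of_mem_incidentEdges hnotwo he hf)
    (TriSys.exists_mem_incidentEdges_ecoord_ne (hpm j i hij.symm) hXsub (by simp) (by simp) hpq)
  have hcls : ∀ e ∈ incidentEdges H {p, q}, ecoord e i ∈ H.cls i := fun e he =>
    H.ecoord_mem_cls ((TriSys.mem_incidentEdges hXsub).mp he).1 i
  have huvk : ∀ n ∈ ({u, v} : Finset α), n ∈ H.cls k := fun n hn =>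
    (TriSys.mem_nbr.mp (hN ▸ hn)).1
  exact exists_fanoEdges_eq H _ hij hik hjk (hcls a ha) (hcls b hb) (hXsub (by simp))
    (hXsub (by simp)) (huvk u (by simp)) (huvk v (by simp)) hab hpq huv
    fun e => ⟨hpat e, mem_of_inFanoPattern hij hik hjk hpq huv hpat hall⟩

/-- If every link graph of `H` has a perfect matching, `X` is a minimal
equineighbored set of size `2` in the link graph over class `i` (with
`X ⊆ V_j`), and no two disjoint edges of `H` both meet `X`, then the edges of
`H` incident to `X` form a truncated multi-Fano plane. -/
theorem incident_edges_form_multiFano (H : TriSys α)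
    (hpm : ∀ j k : Fin 3, j ≠ k → LinkPerfectMatching H j k)
    (i j k : Fin 3) (hij : i ≠ j) (hik : i ≠ k) (hjk : j ≠ k)
    (X : Finset α) (hXsub : X ⊆ H.cls j) (hXcard : X.card = 2)
    (hXne : X.Nonempty)
    (hequi : (nbr H k j X).card = X.card)
    (hmin : ∀ X' ⊂ X, X'.Nonempty → (nbr H k j X').card ≠ X'.card)
    (hnotwo : ¬ ∃ e ∈ H.edges, ∃ f ∈ H.edges,
      (evset e ∩ X).Nonempty ∧ (evset f ∩ X).Nonempty ∧
      Disjoint (evset e) (evset f)) :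
    ∃ a b c x y z : α,
      a ∈ H.V1 ∧ x ∈ H.V1 ∧ b ∈ H.V2 ∧ y ∈ H.V2 ∧ c ∈ H.V3 ∧ z ∈ H.V3 ∧
      a ≠ x ∧ b ≠ y ∧ c ≠ z ∧
      (H.edges.filter fun e => (evset e ∩ X).Nonempty).toFinset =
        FanoEdges a b c x y z :=
  incident_edges_form_multiFano_general H hpm i j k hij hik hjk X hXsub hXcard hequi hmin hnotwo
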